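/- arXiv:2103.09357 — 2 statements merged into one kernel-verified Lean document; each statement's English description precedes it below -/
import Mathlib

section
/- Let V, Q be real Hilbert spaces with fitted norms: ‖q‖_Q² = |q|_Q² + c(q,q) (with |·|_Q a seminorm on Q and c symmetric positive semidefinite bilinear on Q), Q̄ the Riesz map of (·,·)_Q, B : V → Q' the operator with ⟨Bv,q⟩ = b(v,q), and ‖v‖_V² = |v|_V² + ‖Bv‖_{Q'}² (with |·|_V a seminorm on V). Suppose the bilinear form a on V×V is symmetric positive semidefinite, continuous with constant C̄_a (a(u,v) ≤ C̄_a‖u‖_V‖v‖_V), and coercive in the seminorm: a(v,v) ≥ C_a_low |v|_V² with C_a_low > 0. Suppose further there exists β > 0 such that for every q ∈ Q, sup_{v≠0} b(v,q)/‖v‖_V ≥ β |q|_Q. Then there exists α > 0, depending only on C̄_a, C_a_low, β, such that inf_{(u,p)≠0} sup_{(v,q)≠0} A((u,p),(v,q)) / (‖(u,p)‖_Y ‖(v,q)‖_Y) ≥ α, where A((u,p),(v,q)) = a(u,v)+b(v,p)+b(u,q)−c(p,q) and ‖(v,q)‖_Y² = ‖v‖_V² + ‖q‖_Q². -/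
/-!
Write `S` for the supremum and `N = ‖(u, p)‖_Y`. Testing `A((u,p),·)` with `(u, -p)` gives
`C_a_low |u|_V² + c(p,p) ≤ S N`, testing with `(v, 0)` and the inf-sup condition gives
`β |p|_Q ≤ S + C̄_a ‖u‖_V`, and testing with `(0, q)` for all `q` gives `‖Bu‖_{Q'} ≤ S + √c(p,p)`.
Through the fitted norms these three bounds control every part of `N²`; once `S ≤ N`
(otherwise there is nothing to prove) all of them are `O(S N)`, whence `N ≤ K S`.
-/

theorem LinearMap.BilinForm.abs_apply_le_sqrt_mul_sqrt {M : Type*} [AddCommGroup M]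
    [Module ℝ M] (c : LinearMap.BilinForm ℝ M) (hpos : ∀ x, 0 ≤ c x x) (hc : LinearMap.IsSymm c)
    (x y : M) : |c x y| ≤ √(c x x) * √(c y y) := by
  rw [← Real.sqrt_mul (hpos x)]
  exact Real.abs_le_sqrt (c.apply_sq_le_of_symm hpos hc x y)

theorem le_sqrt_sq_add_sq_left (x y : ℝ) (hx : 0 ≤ x) : x ≤ √(x ^ 2 + y ^ 2) :=
  (Real.le_sqrt hx (by positivity)).2 (by nlinarith)

theorem le_sqrt_sq_add_sq_right (x y : ℝ) (hy : 0 ≤ y) : y ≤ √(x ^ 2 + y ^ 2) :=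
  (Real.le_sqrt hy (by positivity)).2 (by nlinarith)

theorem mul_le_ciSup_div {ι : Type*} {f g : ι → ℝ} (hf : BddAbove (Set.range fun i => f i / g i))
    (i : ι) (hg : 0 < g i) : f i ≤ (⨆ j, f j / g j) * g i :=
  (div_le_iff₀ hg).1 (le_ciSup hf i)

/-- The reciprocal of the inf-sup constant `α`. -/
noncomputable def infSupConstant (Ca ca β : ℝ) : ℝ :=
  5 + 1 / ca + 2 * (1 + Ca ^ 2 * (4 + 1 / ca)) / β ^ 2

theorem one_le_infSupConstant {Ca ca β : ℝ} (hca : 0 < ca) : 1 ≤ infSupConstant Ca ca β := by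
  unfold infSupConstant
  have : 0 ≤ 1 / ca := by positivity
  have : 0 ≤ 2 * (1 + Ca ^ 2 * (4 + 1 / ca)) / β ^ 2 := by positivity
  linarith

section SaddlePoint

variable {V Q : Type*} [NormedAddCommGroup V] [NormedSpace ℝ V]
  [NormedAddCommGroup Q] [NormedSpace ℝ Q]

/-- `A((u, p), (v, q))`. -/
noncomputable def saddleForm (a : V →ₗ[ℝ] V →ₗ[ℝ] ℝ) (c : Q →ₗ[ℝ] Q →ₗ[ℝ] ℝ)
    (B : V →L[ℝ] StrongDual ℝ Q) (u : V) (p : Q) (v : V) (q : Q) : ℝ :=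
  a u v + B v p + B u q - c p q

variable {a : V →ₗ[ℝ] V →ₗ[ℝ] ℝ} {c : Q →ₗ[ℝ] Q →ₗ[ℝ] ℝ} {B : V →L[ℝ] StrongDual ℝ Q}

theorem norm_apply_le_norm_of_fitted {s : V → ℝ} (hVfit : ∀ v, ‖v‖ ^ 2 = s v ^ 2 + ‖B v‖ ^ 2)
    (v : V) : ‖B v‖ ≤ ‖v‖ :=
  (pow_le_pow_iff_left₀ (norm_nonneg _) (norm_nonneg _) two_ne_zero).1
    (by nlinarith [hVfit v, sq_nonneg (s v)])

theorem sqrt_apply_self_le_norm_of_fitted {s : Q → ℝ} (hQfit : ∀ q, ‖q‖ ^ 2 = s q ^ 2 + c q q)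
    (q : Q) : √(c q q) ≤ ‖q‖ :=
  (Real.sqrt_le_left (norm_nonneg q)).2 (by nlinarith [hQfit q, sq_nonneg (s q)])

theorem abs_apply_le_sqrt_mul_norm_of_fitted {s : Q → ℝ} (hcpos : ∀ q, 0 ≤ c q q)
    (hcsymm : LinearMap.IsSymm c) (hQfit : ∀ q, ‖q‖ ^ 2 = s q ^ 2 + c q q) (p q : Q) :
    |c p q| ≤ √(c p p) * ‖q‖ :=
  (LinearMap.BilinForm.abs_apply_le_sqrt_mul_sqrt c hcpos hcsymm p q).trans
    (mul_le_mul_of_nonneg_left (sqrt_apply_self_le_norm_of_fitted hQfit q) (Real.sqrt_nonneg _))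

theorem abs_apply_le_norm_mul_norm (hB : ∀ v, ‖B v‖ ≤ ‖v‖) (v : V) (q : Q) :
    |B v q| ≤ ‖v‖ * ‖q‖ :=
  ((B v).le_opNorm q).trans (mul_le_mul_of_nonneg_right (hB v) (norm_nonneg q))

theorem saddleForm_le {Ca : ℝ} (hCa : 0 ≤ Ca) (hacont : ∀ u v : V, a u v ≤ Ca * ‖u‖ * ‖v‖)
    (hB : ∀ v, ‖B v‖ ≤ ‖v‖) (hc : ∀ p q : Q, |c p q| ≤ ‖p‖ * ‖q‖)
    (u : V) (p : Q) (v : V) (q : Q) :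
    saddleForm a c B u p v q ≤ (Ca + 3) * √(‖u‖ ^ 2 + ‖p‖ ^ 2) * √(‖v‖ ^ 2 + ‖q‖ ^ 2) := by
  set N := √(‖u‖ ^ 2 + ‖p‖ ^ 2)
  set D := √(‖v‖ ^ 2 + ‖q‖ ^ 2)
  have hu := le_sqrt_sq_add_sq_left _ ‖p‖ (norm_nonneg u)
  have hp := le_sqrt_sq_add_sq_right ‖u‖ _ (norm_nonneg p)
  have hv := le_sqrt_sq_add_sq_left _ ‖q‖ (norm_nonneg v)
  have hq := le_sqrt_sq_add_sq_right ‖v‖ _ (norm_nonneg q)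
  have huv : ‖u‖ * ‖v‖ ≤ N * D := mul_le_mul hu hv (norm_nonneg v) (Real.sqrt_nonneg _)
  have hvp : ‖v‖ * ‖p‖ ≤ N * D := by
    rw [mul_comm N]; exact mul_le_mul hv hp (norm_nonneg p) (Real.sqrt_nonneg _)
  have huq : ‖u‖ * ‖q‖ ≤ N * D := mul_le_mul hu hq (norm_nonneg q) (Real.sqrt_nonneg _)
  have hpq : ‖p‖ * ‖q‖ ≤ N * D := mul_le_mul hp hq (norm_nonneg q) (Real.sqrt_nonneg _)
  have h1 := hacont u v
  have h2 := (le_abs_self _).trans (abs_apply_le_norm_mul_norm hB v p)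
  have h3 := (le_abs_self _).trans (abs_apply_le_norm_mul_norm hB u q)
  have h4 := (neg_le_abs (c p q)).trans (hc p q)
  unfold saddleForm
  nlinarith [mul_le_mul_of_nonneg_left huv hCa]

theorem coercive_bound_of_saddleForm_le {ca S : ℝ} {s : V → ℝ}
    (hacoer : ∀ v, ca * s v ^ 2 ≤ a v v) {u : V} {p : Q}
    (hS : ∀ v q, saddleForm a c B u p v q ≤ S * √(‖v‖ ^ 2 + ‖q‖ ^ 2)) :
    ca * s u ^ 2 + c p p ≤ S * √(‖u‖ ^ 2 + ‖p‖ ^ 2) := by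
  have h := hS u (-p)
  simp only [saddleForm, map_neg, norm_neg] at h
  linarith [hacoer u]

theorem infSup_bound_of_saddleForm_le {Ca β S : ℝ} {s : Q → ℝ} (hCa : 0 ≤ Ca)
    (hacont : ∀ u v : V, a u v ≤ Ca * ‖u‖ * ‖v‖) (hinfsup : ∀ q, β * s q ≤ ⨆ v : V, B v q / ‖v‖)
    {u : V} {p : Q} (hS0 : 0 ≤ S)
    (hS : ∀ v q, saddleForm a c B u p v q ≤ S * √(‖v‖ ^ 2 + ‖q‖ ^ 2)) :
    β * s p ≤ S + Ca * ‖u‖ := by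
  refine (hinfsup p).trans (ciSup_le fun v => ?_)
  rcases (norm_nonneg v).eq_or_lt with hv | hv
  · rw [← hv, div_zero]; positivity
  rw [div_le_iff₀ hv]
  have h := hS v 0
  have h' := hacont u (-v)
  simp only [saddleForm, map_zero, map_neg, norm_zero, norm_neg, add_zero, sub_zero,
    zero_pow two_ne_zero, Real.sqrt_sq (norm_nonneg v)] at h h'
  linarith

theorem norm_apply_le_of_saddleForm_le {S : ℝ} {u : V} {p : Q}
    (hc : ∀ q, |c p q| ≤ √(c p p) * ‖q‖) (hS0 : 0 ≤ S)
    (hS : ∀ v q, saddleForm a c B u p v q ≤ S * √(‖v‖ ^ 2 + ‖q‖ ^ 2)) :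
    ‖B u‖ ≤ S + √(c p p) := by
  have key : ∀ q, B u q ≤ (S + √(c p p)) * ‖q‖ := fun q => by
    have h := hS 0 q
    simp only [saddleForm, map_zero, zero_apply, add_zero, zero_add, norm_zero,
      zero_pow two_ne_zero, Real.sqrt_sq (norm_nonneg q)] at h
    linarith [(le_abs_self _).trans (hc q)]
  refine (B u).opNorm_le_bound (by positivity) fun q => ?_
  have := key (-q)
  simp only [map_neg, norm_neg] at this
  rw [Real.norm_eq_abs, abs_le]
  constructor <;> linarith [key q]

theorem sqrt_le_infSupConstant_mul {Ca ca β S : ℝ} {sV : V → ℝ} {sQ : Seminorm ℝ Q}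
    (hca : 0 < ca) (hβ : 0 < β) (hcpos : ∀ q, 0 ≤ c q q)
    (hQfit : ∀ q, ‖q‖ ^ 2 = sQ q ^ 2 + c q q) (hVfit : ∀ v, ‖v‖ ^ 2 = sV v ^ 2 + ‖B v‖ ^ 2)
    {u : V} {p : Q} (hS0 : 0 ≤ S)
    (hcoer : ca * sV u ^ 2 + c p p ≤ S * √(‖u‖ ^ 2 + ‖p‖ ^ 2))
    (hinfsup : β * sQ p ≤ S + Ca * ‖u‖) (hdual : ‖B u‖ ≤ S + √(c p p)) :
    √(‖u‖ ^ 2 + ‖p‖ ^ 2) ≤ infSupConstant Ca ca β * S := by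
  set N := √(‖u‖ ^ 2 + ‖p‖ ^ 2)
  rcases le_total N S with hNS | hSN
  · exact hNS.trans (le_mul_of_one_le_left hS0 (one_le_infSupConstant hca))
  have hN : N ^ 2 = ‖u‖ ^ 2 + ‖p‖ ^ 2 := Real.sq_sqrt (by positivity)
  have hSS : S ^ 2 ≤ S * N := by nlinarith
  have hc : c p p ≤ S * N := by nlinarith [sq_nonneg (sV u)]
  have hsV : sV u ^ 2 ≤ S * N / ca := (le_div_iff₀' hca).2 (by linarith [hcpos p])
  have hBu : ‖B u‖ ^ 2 ≤ 4 * (S * N) := by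
    have := Real.sq_sqrt (hcpos p)
    nlinarith [sq_nonneg (S - √(c p p)), norm_nonneg (B u), Real.sqrt_nonneg (c p p)]
  have hu : ‖u‖ ^ 2 ≤ (1 / ca + 4) * (S * N) := by
    rw [hVfit u, add_mul, one_div_mul_eq_div]; linarith
  have hsQ : sQ p ^ 2 ≤ 2 * (1 + Ca ^ 2 * (4 + 1 / ca)) / β ^ 2 * (S * N) := by
    rw [div_mul_eq_mul_div, le_div_iff₀' (by positivity)]
    have h0 : 0 ≤ β * sQ p := mul_nonneg hβ.le (apply_nonneg sQ p)
    nlinarith [sq_nonneg (S - Ca * ‖u‖), mul_le_mul_of_nonneg_left hu (sq_nonneg Ca)]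
  have hp : ‖p‖ ^ 2 ≤ (1 + 2 * (1 + Ca ^ 2 * (4 + 1 / ca)) / β ^ 2) * (S * N) := by
    rw [hQfit p]; linarith
  have hNN : N * N ≤ (infSupConstant Ca ca β * S) * N := by
    unfold infSupConstant; nlinarith
  have hKS : 0 ≤ infSupConstant Ca ca β * S :=
    mul_nonneg (zero_le_one.trans (one_le_infSupConstant hca)) hS0
  nlinarith

theorem bddAbove_range_saddleForm_div {Ca : ℝ} (hCa : 0 ≤ Ca)
    (hacont : ∀ u v : V, a u v ≤ Ca * ‖u‖ * ‖v‖) (hB : ∀ v, ‖B v‖ ≤ ‖v‖)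
    (hc : ∀ p q : Q, |c p q| ≤ ‖p‖ * ‖q‖) (u : V) (p : Q) :
    BddAbove (Set.range fun vq : V × Q =>
      saddleForm a c B u p vq.1 vq.2 / √(‖vq.1‖ ^ 2 + ‖vq.2‖ ^ 2)) := by
  refine ⟨(Ca + 3) * √(‖u‖ ^ 2 + ‖p‖ ^ 2), ?_⟩
  rintro _ ⟨⟨v, q⟩, rfl⟩
  exact div_le_of_le_mul₀ (Real.sqrt_nonneg _) (by positivity)
    (saddleForm_le hCa hacont hB hc u p v q)

theorem iSup_saddleForm_div_nonneg {Ca : ℝ} (hCa : 0 ≤ Ca)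
    (hacont : ∀ u v : V, a u v ≤ Ca * ‖u‖ * ‖v‖) (hB : ∀ v, ‖B v‖ ≤ ‖v‖)
    (hc : ∀ p q : Q, |c p q| ≤ ‖p‖ * ‖q‖) (u : V) (p : Q) :
    0 ≤ ⨆ vq : V × Q, saddleForm a c B u p vq.1 vq.2 / √(‖vq.1‖ ^ 2 + ‖vq.2‖ ^ 2) :=
  (le_ciSup (bddAbove_range_saddleForm_div hCa hacont hB hc u p) (0, 0)).trans'
    (by simp [saddleForm])

theorem saddleForm_le_iSup_mul {Ca : ℝ} (hCa : 0 ≤ Ca)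
    (hacont : ∀ u v : V, a u v ≤ Ca * ‖u‖ * ‖v‖) (hB : ∀ v, ‖B v‖ ≤ ‖v‖)
    (hc : ∀ p q : Q, |c p q| ≤ ‖p‖ * ‖q‖) (u : V) (p : Q) (v : V) (q : Q) :
    saddleForm a c B u p v q ≤
      (⨆ vq : V × Q, saddleForm a c B u p vq.1 vq.2 / √(‖vq.1‖ ^ 2 + ‖vq.2‖ ^ 2)) *
        √(‖v‖ ^ 2 + ‖q‖ ^ 2) := by
  rcases (Real.sqrt_nonneg (‖v‖ ^ 2 + ‖q‖ ^ 2)).eq_or_lt with hD | hD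
  · simpa [← hD] using saddleForm_le hCa hacont hB hc u p v q
  · exact mul_le_ciSup_div (bddAbove_range_saddleForm_div hCa hacont hB hc u p) (v, q) hD

end SaddlePoint

theorem stmt3_general {V Q : Type*}
    [NormedAddCommGroup V] [InnerProductSpace ℝ V]
    [NormedAddCommGroup Q] [InnerProductSpace ℝ Q]
    (a : V →ₗ[ℝ] V →ₗ[ℝ] ℝ) (c : Q →ₗ[ℝ] Q →ₗ[ℝ] ℝ)
    (B : V →L[ℝ] StrongDual ℝ Q)
    (absV : Seminorm ℝ V) (absQ : Seminorm ℝ Q)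
    (hcsymm : ∀ p q : Q, c p q = c q p) (hcpos : ∀ q : Q, 0 ≤ c q q)
    (hQfit : ∀ q : Q, ‖q‖ ^ 2 = absQ q ^ 2 + c q q)
    (hVfit : ∀ v : V, ‖v‖ ^ 2 = absV v ^ 2 + ‖B v‖ ^ 2)
    (Ca ca β : ℝ) (hCa : 0 < Ca) (hca : 0 < ca) (hβ : 0 < β)
    (hacont : ∀ u v : V, a u v ≤ Ca * ‖u‖ * ‖v‖)
    (hacoer : ∀ v : V, ca * absV v ^ 2 ≤ a v v)
    (hinfsup : ∀ q : Q, β * absQ q ≤ ⨆ v : V, B v q / ‖v‖) :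
    ∃ α > (0 : ℝ), ∀ (u : V) (p : Q),
      α * Real.sqrt (‖u‖ ^ 2 + ‖p‖ ^ 2) ≤
        ⨆ vq : V × Q,
          (a u vq.1 + B vq.1 p + B u vq.2 - c p vq.2) /
            Real.sqrt (‖vq.1‖ ^ 2 + ‖vq.2‖ ^ 2) := by
  have hB := norm_apply_le_norm_of_fitted hVfit
  have hcp := abs_apply_le_sqrt_mul_norm_of_fitted hcpos ⟨hcsymm⟩ hQfit
  have hc : ∀ p q : Q, |c p q| ≤ ‖p‖ * ‖q‖ := fun p q =>
    (hcp p q).trans (mul_le_mul_of_nonneg_right (sqrt_apply_self_le_norm_of_fitted hQfit p)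
      (norm_nonneg q))
  have hK := zero_lt_one.trans_le (one_le_infSupConstant (Ca := Ca) (β := β) hca)
  refine ⟨1 / infSupConstant Ca ca β, one_div_pos.2 hK, fun u p => ?_⟩
  have hS := saddleForm_le_iSup_mul hCa.le hacont hB hc u p
  have hS0 := iSup_saddleForm_div_nonneg hCa.le hacont hB hc u p
  rw [one_div_mul_eq_div, div_le_iff₀' hK]
  exact sqrt_le_infSupConstant_mul hca hβ hcpos hQfit hVfit hS0
    (coercive_bound_of_saddleForm_le hacoer hS)
    (infSup_bound_of_saddleForm_le hCa.le hacont hinfsup hS0 hS)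
    (norm_apply_le_of_saddleForm_le (hcp p) hS0 hS)

/-- Main fitted-norm stability theorem: under the norm splittings
`‖q‖_Q² = |q|_Q² + c(q,q)`, `‖v‖_V² = |v|_V² + ‖Bv‖_{Q'}²`, continuity and seminorm-coercivity
of `a`, and the small inf-sup condition for `b` in the seminorm `|·|_Q`, the big (Babuška)
inf-sup condition holds for `A((u,p),(v,q)) = a(u,v)+b(v,p)+b(u,q)-c(p,q)`. -/
theorem stmt3 {V Q : Type*}
    [NormedAddCommGroup V] [InnerProductSpace ℝ V] [CompleteSpace V]
    [NormedAddCommGroup Q] [InnerProductSpace ℝ Q] [CompleteSpace Q]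
    (a : V →ₗ[ℝ] V →ₗ[ℝ] ℝ) (c : Q →ₗ[ℝ] Q →ₗ[ℝ] ℝ)
    (B : V →L[ℝ] StrongDual ℝ Q)
    (absV : Seminorm ℝ V) (absQ : Seminorm ℝ Q)
    (hasymm : ∀ u v : V, a u v = a v u) (hapos : ∀ v : V, 0 ≤ a v v)
    (hcsymm : ∀ p q : Q, c p q = c q p) (hcpos : ∀ q : Q, 0 ≤ c q q)
    (hQfit : ∀ q : Q, ‖q‖ ^ 2 = absQ q ^ 2 + c q q)
    (hVfit : ∀ v : V, ‖v‖ ^ 2 = absV v ^ 2 + ‖B v‖ ^ 2)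
    (Ca ca β : ℝ) (hCa : 0 < Ca) (hca : 0 < ca) (hβ : 0 < β)
    (hacont : ∀ u v : V, a u v ≤ Ca * ‖u‖ * ‖v‖)
    (hacoer : ∀ v : V, ca * absV v ^ 2 ≤ a v v)
    (hinfsup : ∀ q : Q, β * absQ q ≤ ⨆ v : V, B v q / ‖v‖) :
    ∃ α > (0 : ℝ), ∀ (u : V) (p : Q),
      α * Real.sqrt (‖u‖ ^ 2 + ‖p‖ ^ 2) ≤
        ⨆ vq : V × Q,
          (a u vq.1 + B vq.1 p + B u vq.2 - c p vq.2) /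
            Real.sqrt (‖vq.1‖ ^ 2 + ‖vq.2‖ ^ 2) :=
  stmt3_general a c B absV absQ hcsymm hcpos hQfit hVfit Ca ca β hCa hca hβ hacont hacoer hinfsup
end

section
/- Let H be a real Hilbert space and 𝒜 a bounded bilinear form on H satisfying the inf-sup condition inf_{x≠0} sup_{y≠0} 𝒜(x,y)/(‖x‖‖y‖) ≥ α > 0 and the transposed nondegeneracy condition (for all y ≠ 0 there exists x with 𝒜(x,y) ≠ 0). Then for every bounded linear functional F ∈ H' the problem 𝒜(x,y) = F(y) for all y ∈ H has a unique solution x, and ‖x‖ ≤ α⁻¹ ‖F‖_{H'}. -/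
/-!
The inf-sup condition says exactly that `x ↦ 𝒜(x, ·)` is bounded below, `α ‖x‖ ≤ ‖𝒜 x‖`, so it is
injective with closed range. Transported to `H` by the Riesz isomorphism, its range has trivial
orthogonal complement by the transposed condition, hence is everything. The bound `α ‖x‖ ≤ ‖F‖`
for a solution is the same lower bound once more.
-/

open InnerProductSpace NNReal

theorem ContinuousLinearMap.iSup_div_norm_le_opNorm {E : Type*} [NormedAddCommGroup E]
    [NormedSpace ℝ E] (f : StrongDual ℝ E) : ⨆ y : E, f y / ‖y‖ ≤ ‖f‖ :=
  ciSup_le fun y =>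
    div_le_of_le_mul₀ (norm_nonneg y) (norm_nonneg f) ((le_abs_self _).trans (f.le_opNorm y))

theorem ContinuousLinearMap.antilipschitzWith_of_mul_norm_le {𝕜 E F : Type*}
    [NontriviallyNormedField 𝕜] [NormedAddCommGroup E] [NormedSpace 𝕜 E] [NormedAddCommGroup F]
    [NormedSpace 𝕜 F] (f : E →L[𝕜] F) {α : ℝ} (hα : 0 < α) (h : ∀ x, α * ‖x‖ ≤ ‖f x‖) :
    AntilipschitzWith (Real.toNNReal α)⁻¹ f :=
  f.antilipschitz_of_bound fun x => by
    rw [NNReal.coe_inv, Real.coe_toNNReal _ hα.le, ← div_eq_inv_mul, le_div_iff₀' hα]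
    exact h x

theorem ContinuousLinearMap.surjective_of_antilipschitzWith_of_orthogonal {𝕜 E F : Type*} [RCLike 𝕜]
    [NormedAddCommGroup E] [NormedSpace 𝕜 E] [CompleteSpace E] [NormedAddCommGroup F]
    [InnerProductSpace 𝕜 F] (T : E →L[𝕜] F) {K : ℝ≥0} (hT : AntilipschitzWith K T)
    (hperp : ∀ y, (∀ x, inner 𝕜 (T x) y = 0) → y = 0) : Function.Surjective T := by
  have : CompleteSpace T.range := (hT.isComplete_range T.uniformContinuous).completeSpace_coe
  have hrange : T.range = ⊤ := by
    rw [← Submodule.orthogonal_eq_bot_iff, Submodule.eq_bot_iff]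
    exact fun y hy => hperp y fun x => (Submodule.mem_orthogonal _ y).mp hy (T x) ⟨x, rfl⟩
  exact LinearMap.range_eq_top.mp hrange

section Bilinear

variable {H : Type*} [NormedAddCommGroup H] [InnerProductSpace ℝ H] [CompleteSpace H]

theorem norm_continuousLinearMapOfBilin_apply (A : H →L[ℝ] H →L[ℝ] ℝ) (x : H) :
    ‖continuousLinearMapOfBilin (𝕜 := ℝ) A x‖ = ‖A x‖ :=
  (toDual ℝ H).symm.norm_map (A x)

theorem surjective_of_mul_norm_le_of_exists_ne_zero (A : H →L[ℝ] H →L[ℝ] ℝ) {α : ℝ} (hα : 0 < α)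
    (hbelow : ∀ x, α * ‖x‖ ≤ ‖A x‖) (hT : ∀ y : H, y ≠ 0 → ∃ x : H, A x y ≠ 0) :
    Function.Surjective A := by
  have hTsurj : Function.Surjective (continuousLinearMapOfBilin (𝕜 := ℝ) A) := by
    refine ContinuousLinearMap.surjective_of_antilipschitzWith_of_orthogonal _
      (ContinuousLinearMap.antilipschitzWith_of_mul_norm_le _ hα fun x => ?_) fun y hy => ?_
    · rw [norm_continuousLinearMapOfBilin_apply]
      exact hbelow x
    · by_contra hy0
      obtain ⟨x, hx⟩ := hT y hy0
      exact hx (by simpa using hy x)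
  intro F
  obtain ⟨x, hx⟩ := hTsurj ((toDual ℝ H).symm F)
  refine ⟨x, ContinuousLinearMap.ext fun y => ?_⟩
  rw [← continuousLinearMapOfBilin_apply, hx, ← toDual_apply_apply,
    LinearIsometryEquiv.apply_symm_apply]

end Bilinear

/-- Babuška's theorem (existence, uniqueness, stability) for a bounded bilinear form
satisfying the inf-sup condition and the transposed nondegeneracy condition. -/
theorem stmt17 {H : Type*} [NormedAddCommGroup H] [InnerProductSpace ℝ H] [CompleteSpace H]
    (A : H →L[ℝ] H →L[ℝ] ℝ) (α : ℝ) (hα : 0 < α)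
    (hinfsup : ∀ x : H, α * ‖x‖ ≤ ⨆ y : H, A x y / ‖y‖)
    (hT : ∀ y : H, y ≠ 0 → ∃ x : H, A x y ≠ 0) :
    ∀ F : StrongDual ℝ H,
      (∃! x : H, ∀ y : H, A x y = F y) ∧
      ∀ x : H, (∀ y : H, A x y = F y) → ‖x‖ ≤ α⁻¹ * ‖F‖ := by
  have hbelow : ∀ x, α * ‖x‖ ≤ ‖A x‖ := fun x => (hinfsup x).trans (A x).iSup_div_norm_le_opNorm
  have hinj : Function.Injective A := (A.antilipschitzWith_of_mul_norm_le hα hbelow).injective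
  intro F
  obtain ⟨x₀, hx₀⟩ := surjective_of_mul_norm_le_of_exists_ne_zero A hα hbelow hT F
  refine ⟨⟨x₀, fun y => by rw [hx₀], fun x hx => hinj ?_⟩, fun x hx => ?_⟩
  · rw [hx₀]; exact ContinuousLinearMap.ext hx
  · rw [inv_mul_eq_div, le_div_iff₀' hα, ← ContinuousLinearMap.ext hx]
    exact hbelow x
end
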